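/- arXiv:1609.05356 — 3 statements merged into one kernel-verified Lean document; each statement's English description precedes it below -/
import Mathlib

section
/- Let (𝕏,σ) be a mixing topological Markov chain. Every point x∈𝕏 with maximal oscillation, i.e. such that every σ-invariant Borel probability measure on 𝕏 is a weak* accumulation point of the sequence of empirical measures (1/n)∑_{j=0}^{n−1}δ_{σ^j(x)}, is a wild historic point: η_x(A)=+∞ for every nonempty open set A⊆𝕏. -/
open MeasureTheory Filter Set Topology
open scoped ENNReal

/-- The space of admissible sequences of a topological Markov chain with alphabet `S` and
incidence relation `a` (`a b c` means the transition `b → c` is allowed). -/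
def MarkovShift {S : Type*} (a : S → S → Prop) : Type _ :=
  {x : ℕ → S // ∀ i : ℕ, a (x i) (x (i + 1))}

/-- The metric `d(x,y) = (1/2)^(min{i : x_i ≠ y_i})` on sequence space. -/
noncomputable instance {S : Type*} [TopologicalSpace S] [DiscreteTopology S] :
    MetricSpace (ℕ → S) :=
  PiNat.metricSpace

noncomputable instance {S : Type*} [TopologicalSpace S] [DiscreteTopology S]
    (a : S → S → Prop) : MetricSpace (MarkovShift a) :=
  inferInstanceAs (MetricSpace {x : ℕ → S // ∀ i : ℕ, a (x i) (x (i + 1))})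

noncomputable instance {S : Type*} [TopologicalSpace S] [DiscreteTopology S] (a : S → S → Prop) :
    MeasurableSpace (MarkovShift a) := borel _

instance {S : Type*} [TopologicalSpace S] [DiscreteTopology S] (a : S → S → Prop) :
    BorelSpace (MarkovShift a) := ⟨rfl⟩

/-- The left shift map on the topological Markov chain. -/
def markovLeftShift {S : Type*} (a : S → S → Prop) : MarkovShift a → MarkovShift a :=
  fun x => ⟨fun i => x.1 (i + 1), fun i => x.2 (i + 1)⟩

/-- Aperiodicity of the incidence matrix: there is `N ≥ 1` such that any two symbols are
joined by an admissible word of length `N`. -/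
def MarkovAperiodic {S : Type*} (a : S → S → Prop) : Prop :=
  ∃ N : ℕ, 1 ≤ N ∧ ∀ b c : S, ∃ u : ℕ → S, u 0 = b ∧ u N = c ∧ ∀ i < N, a (u i) (u (i + 1))

/-- The premeasure `τ_z(E) = limsup_n (1/n) ∑_{j<n} 1_E(σ^j z)`. -/
noncomputable def tauOrbit {X : Type*} (f : X → X) (x : X) (A : Set X) : ℝ≥0∞ :=
  Filter.atTop.limsup fun n : ℕ =>
    (∑ j ∈ Finset.range n, A.indicator (fun _ => (1 : ℝ≥0∞)) (f^[j] x)) / (n : ℝ≥0∞)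

/-- `ν_r(Y)`: infimum of `∑_i τ_x(I_i)` over countable covers of `Y` by open sets of
diameter at most `r`. -/
noncomputable def nuAux {X : Type*} [MetricSpace X] (f : X → X) (x : X) (r : ℝ)
    (Y : Set X) : ℝ≥0∞ :=
  ⨅ (I : ℕ → Set X) (_ : Y ⊆ ⋃ n, I n) (_ : ∀ n, IsOpen (I n))
    (_ : ∀ n, EMetric.diam (I n) ≤ ENNReal.ofReal r), ∑' n, tauOrbit f x (I n)

/-- `ν(Y) = sup_{r>0} ν_r(Y)`, the Carathéodory Method II construction from `τ_x`. -/
noncomputable def nuFun {X : Type*} [MetricSpace X] (f : X → X) (x : X) (Y : Set X) : ℝ≥0∞ :=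
  ⨆ (r : ℝ) (_ : 0 < r), nuAux f x r Y

/-- The empirical probability measure `(1/n)∑_{j<n} δ_{σ^j x}` (here with `n` replaced by
`n+1` so that it is a probability measure for every index). -/
noncomputable def empiricalProb {M : Type*} [MeasurableSpace M] (σ : M → M) (x : M)
    (n : ℕ) : ProbabilityMeasure M :=
  ⟨((n + 1 : ℝ≥0∞))⁻¹ • ∑ j ∈ Finset.range (n + 1), MeasureTheory.Measure.dirac (σ^[j] x), by
    constructor
    rw [MeasureTheory.Measure.smul_apply, MeasureTheory.Measure.finset_sum_apply]
    simp only [MeasureTheory.measure_univ, Finset.sum_const, Finset.card_range,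
      nsmul_eq_mul, mul_one, smul_eq_mul, Nat.cast_add, Nat.cast_one]
    exact ENNReal.inv_mul_cancel (by simp) (by simp)⟩

/-!
Fix a nonempty open set `A`; it contains a cylinder `[z 0, …, z ℓ]`. Using bridges of length `N`
given by aperiodicity, for every `m` there are `2 ^ m` periodic points in this cylinder, all of
period `P = ℓ + (m + 1) N` and pairwise different among their first `P` symbols. The orbit measure
of each is invariant, hence a cluster point of the empirical measures of `x`, so by the
portmanteau theorem `τ_x(U) ≥ 1 / P` for every open `U` containing one of them. A cover by sets of
diameter at most `2 ^ (-P)` puts these points in distinct sets, so `ν(A) ≥ 2 ^ m / P`, which is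
unbounded in `m`.
-/

namespace MarkovShift

variable {S : Type*} {a : S → S → Prop}

theorem markovLeftShift_iterate_apply (n : ℕ) (y : MarkovShift a) (i : ℕ) :
    ((markovLeftShift a)^[n] y).1 i = y.1 (i + n) := by
  induction n generalizing y with
  | zero => rfl
  | succ n ih => rw [Function.iterate_succ_apply, ih]; rfl

def splice (z u : MarkovShift a) (ℓ : ℕ) (h : u.1 0 = z.1 ℓ) : MarkovShift a :=
  ⟨fun i => if i ≤ ℓ then z.1 i else u.1 (i - ℓ), fun i => by
    by_cases hi : i + 1 ≤ ℓ
    · simpa [hi, show i ≤ ℓ by omega] using z.2 i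
    · rcases eq_or_ne i ℓ with rfl | hiℓ
      · simpa [Nat.sub_add_comm, ← h] using u.2 0
      · simpa [show ¬ i ≤ ℓ by omega, hi, show i + 1 - ℓ = i - ℓ + 1 by omega] using u.2 (i - ℓ)⟩

theorem splice_apply_of_le {z u : MarkovShift a} {ℓ : ℕ} (h : u.1 0 = z.1 ℓ) {i : ℕ}
    (hi : i ≤ ℓ) : (splice z u ℓ h).1 i = z.1 i :=
  if_pos hi

theorem splice_apply_add {z u : MarkovShift a} {ℓ : ℕ} (h : u.1 0 = z.1 ℓ) (j : ℕ) :
    (splice z u ℓ h).1 (ℓ + j) = u.1 j := by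
  rcases Nat.eq_zero_or_pos j with rfl | hj
  · exact (if_pos le_rfl).trans h.symm
  · exact (if_neg (by omega)).trans (by simp)

def periodize (w : MarkovShift a) (P : ℕ) (hP : 0 < P) (h : w.1 P = w.1 0) : MarkovShift a :=
  ⟨fun i => w.1 (i % P), fun i => by
    have hlt : i % P < P := Nat.mod_lt i hP
    show a (w.1 (i % P)) (w.1 ((i + 1) % P))
    rw [← Nat.mod_add_mod]
    rcases eq_or_ne (i % P + 1) P with hlast | hlast
    · simpa [hlast, h] using w.2 (i % P)
    · rw [Nat.mod_eq_of_lt (by omega : i % P + 1 < P)]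
      exact w.2 (i % P)⟩

theorem periodize_apply_of_lt {w : MarkovShift a} {P : ℕ} (hP : 0 < P) (h : w.1 P = w.1 0)
    {i : ℕ} (hi : i < P) : (periodize w P hP h).1 i = w.1 i :=
  congrArg w.1 (Nat.mod_eq_of_lt hi)

theorem isPeriodicPt_periodize {w : MarkovShift a} {P : ℕ} (hP : 0 < P) (h : w.1 P = w.1 0) :
    Function.IsPeriodicPt (markovLeftShift a) P (periodize w P hP h) :=
  Subtype.ext <| funext fun i => by
    rw [markovLeftShift_iterate_apply]
    exact congrArg w.1 (Nat.add_mod_right i P)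

theorem exists_apply_mul_eq {N : ℕ} (hN : 0 < N)
    (hbridge : ∀ b c : S, ∃ u : ℕ → S, u 0 = b ∧ u N = c ∧ ∀ i < N, a (u i) (u (i + 1)))
    (s : ℕ → S) : ∃ u : MarkovShift a, ∀ j, u.1 (j * N) = s j := by
  choose bridge hbridge0 hbridgeN hbridge using hbridge
  let u : ℕ → S := fun i => bridge (s (i / N)) (s (i / N + 1)) (i % N)
  have hu : ∀ q r, r < N → u (q * N + r) = bridge (s q) (s (q + 1)) r := by
    intro q r hr
    simp only [u, Nat.add_comm (q * N), Nat.add_mul_div_right _ _ hN, Nat.div_eq_of_lt hr,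
      Nat.add_mul_mod_self_right, Nat.mod_eq_of_lt hr, zero_add]
  refine ⟨⟨u, fun i => ?_⟩, fun j => by simpa [hbridge0] using hu j 0 hN⟩
  obtain ⟨q, r, hr, rfl⟩ : ∃ q r, r < N ∧ i = q * N + r :=
    ⟨i / N, i % N, Nat.mod_lt i hN, (Nat.div_add_mod' i N).symm⟩
  have hstep := hbridge (s q) (s (q + 1)) r hr
  rw [hu q r hr]
  rcases eq_or_ne (r + 1) N with hlast | hlast
  · rw [show q * N + r + 1 = (q + 1) * N + 0 by rw [add_mul]; omega, hu _ 0 hN, hbridge0]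
    rwa [hlast, hbridgeN] at hstep
  · rwa [show q * N + r + 1 = q * N + (r + 1) by ring, hu q (r + 1) (by omega)]

variable [TopologicalSpace S] [DiscreteTopology S]

theorem continuous_markovLeftShift (a : S → S → Prop) : Continuous (markovLeftShift a) := by
  apply Continuous.subtype_mk
  exact continuous_pi fun i => (continuous_apply (i + 1)).comp continuous_subtype_val

theorem exists_cylinder_subset {A : Set (MarkovShift a)} (hA : IsOpen A) {z : MarkovShift a}
    (hz : z ∈ A) : ∃ ℓ, ∀ y : MarkovShift a, (∀ i ≤ ℓ, y.1 i = z.1 i) → y ∈ A := by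
  obtain ⟨ε, hε, hball⟩ := Metric.isOpen_iff.mp hA z hz
  obtain ⟨ℓ, hℓ⟩ : ∃ ℓ : ℕ, (1 / 2 : ℝ) ^ ℓ < ε := exists_pow_lt_of_lt_one hε one_half_lt_one
  refine ⟨ℓ, fun y hy => hball ?_⟩
  have hcyl : dist y.1 z.1 ≤ (1 / 2 : ℝ) ^ (ℓ + 1) :=
    PiNat.mem_cylinder_iff_dist_le.mp fun i hi => hy i (Nat.lt_succ_iff.mp hi)
  calc dist y z = dist y.1 z.1 := rfl
    _ ≤ (1 / 2 : ℝ) ^ (ℓ + 1) := hcyl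
    _ < ε := lt_of_le_of_lt (pow_le_pow_of_le_one (by norm_num) (by norm_num) ℓ.le_succ) hℓ

theorem lt_dist_of_apply_ne {y y' : MarkovShift a} {p n : ℕ} (hp : p < n)
    (hne : y.1 p ≠ y'.1 p) : (1 / 2 : ℝ) ^ n < dist y y' := by
  by_contra! h
  exact hne (PiNat.mem_cylinder_iff_dist_le.mpr h p hp)

/-- Each point of the family runs through `z 0, …, z ℓ` and then, between bridges of length `N`,
through the symbols `β`/`γ` selected by its index, before bridging back to `z 0`. -/
theorem exists_periodic_family {N : ℕ} (hN : 0 < N)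
    (hinterp : ∀ s : ℕ → S, ∃ u : MarkovShift a, ∀ j, u.1 (j * N) = s j)
    {β γ : S} (hβγ : β ≠ γ) (z : MarkovShift a) (ℓ m : ℕ) :
    ∃ Q : (Fin m → Bool) → MarkovShift a,
      (∀ v, ∀ i ≤ ℓ, (Q v).1 i = z.1 i) ∧
      (∀ v, Function.IsPeriodicPt (markovLeftShift a) (ℓ + (m + 1) * N) (Q v)) ∧
      Pairwise fun v w => (1 / 2 : ℝ) ^ (ℓ + (m + 1) * N) < dist (Q v) (Q w) := by
  set P := ℓ + (m + 1) * N
  have hmN : 0 < (m + 1) * N := by positivity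
  have hP : 0 < P := by omega
  let bit : Bool → S := fun b => if b then β else γ
  have hbit : Function.Injective bit := by
    intro b b'; cases b <;> cases b' <;> simp [bit, hβγ, hβγ.symm]
  let s : (Fin m → Bool) → ℕ → S := fun v j =>
    if j = 0 then z.1 ℓ else if h : j - 1 < m then bit (v ⟨j - 1, h⟩) else z.1 0
  choose u hu using fun v => hinterp (s v)
  have hu0 : ∀ v, (u v).1 0 = z.1 ℓ := fun v => by simpa [s] using hu v 0
  let w : (Fin m → Bool) → MarkovShift a := fun v => splice z (u v) ℓ (hu0 v)
  have hwP : ∀ v, (w v).1 P = (w v).1 0 := fun v => by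
    rw [splice_apply_add, hu, splice_apply_of_le _ (Nat.zero_le ℓ)]
    simp [s]
  have hw_bit : ∀ v (j : Fin m), (w v).1 (ℓ + (j + 1) * N) = bit (v j) := fun v j => by
    rw [splice_apply_add, hu]
    simp [s]
  refine ⟨fun v => periodize (w v) P hP (hwP v), fun v i hi => ?_,
    fun v => isPeriodicPt_periodize hP (hwP v), fun v v' hne => ?_⟩
  · rw [periodize_apply_of_lt hP _ (by omega)]
    exact splice_apply_of_le _ hi
  · obtain ⟨j, hj⟩ := Function.ne_iff.mp hne
    have hjP : ℓ + (j + 1) * N < P := by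
      have := j.2
      simp only [P]
      nlinarith
    refine lt_dist_of_apply_ne hjP ?_
    rw [periodize_apply_of_lt hP _ hjP, periodize_apply_of_lt hP _ hjP, hw_bit, hw_bit]
    exact hbit.ne hj

end MarkovShift

theorem exists_mul_add_le_two_pow (c d : ℕ) : ∃ m, c * m + d ≤ 2 ^ m := by
  obtain ⟨t, ht⟩ : ∃ t, t = 2 * c + d + 1 := ⟨_, rfl⟩
  refine ⟨2 * t, ?_⟩
  have h2t : t < 2 ^ t := Nat.lt_two_pow_self
  calc c * (2 * t) + d ≤ t * t := by subst ht; nlinarith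
    _ ≤ 2 ^ t * 2 ^ t := Nat.mul_le_mul h2t.le h2t.le
    _ = 2 ^ (2 * t) := by rw [← pow_add, two_mul]

section EmpiricalMeasures

variable {M : Type*} [MeasurableSpace M]

theorem empiricalProb_apply (σ : M → M) (x : M) (n : ℕ) {E : Set M} (hE : MeasurableSet E) :
    (empiricalProb σ x n).toMeasure E =
      (∑ j ∈ Finset.range (n + 1), E.indicator (fun _ => (1 : ℝ≥0∞)) (σ^[j] x)) /
        ((n + 1 : ℕ) : ℝ≥0∞) := by
  change ((((n + 1 : ℝ≥0∞))⁻¹ • ∑ j ∈ Finset.range (n + 1), Measure.dirac (σ^[j] x)) E) = _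
  rw [Measure.smul_apply, Measure.finsetSum_apply, smul_eq_mul, ENNReal.div_eq_inv_mul]
  push_cast
  simp only [Measure.dirac_apply' _ hE]
  rfl

theorem inv_le_empiricalProb_of_mem (σ : M → M) {q : M} (n : ℕ) {E : Set M}
    (hE : MeasurableSet E) (hq : q ∈ E) :
    ((n + 1 : ℕ) : ℝ≥0∞)⁻¹ ≤ (empiricalProb σ q n).toMeasure E := by
  rw [empiricalProb_apply σ q n hE, ← one_div]
  gcongr
  calc (1 : ℝ≥0∞) = E.indicator (fun _ => 1) (σ^[0] q) := by simp [hq]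
    _ ≤ _ := Finset.single_le_sum (f := fun j => E.indicator (fun _ => (1 : ℝ≥0∞)) (σ^[j] q))
        (fun _ _ => zero_le) (Finset.mem_range.mpr n.succ_pos)

theorem empiricalProb_preimage_of_isPeriodicPt {σ : M → M} (hσ : Measurable σ) {q : M}
    {n : ℕ} (hq : Function.IsPeriodicPt σ (n + 1) q) {E : Set M} (hE : MeasurableSet E) :
    (empiricalProb σ q n).toMeasure (σ ⁻¹' E) = (empiricalProb σ q n).toMeasure E := by
  rw [empiricalProb_apply σ q n (hσ hE), empiricalProb_apply σ q n hE]
  set f : ℕ → ℝ≥0∞ := fun j => E.indicator (fun _ => 1) (σ^[j] q)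
  have hshift : ∀ j, (σ ⁻¹' E).indicator (fun _ => (1 : ℝ≥0∞)) (σ^[j] q) = f (j + 1) := by
    intro j
    by_cases h : σ (σ^[j] q) ∈ E <;> simp [f, Function.iterate_succ_apply', h]
  have hf : f (n + 1) = f 0 := by simp [f, hq.eq]
  simp only [hshift]
  rw [Finset.sum_range_succ, hf, Finset.sum_range_succ' f]

/-- Portmanteau along the filter `𝓝 μ ⊓ map (empiricalProb σ x) atTop`; that
`empiricalProb σ x n` averages over `n + 1` points is an index shift invisible to the `limsup`. -/
theorem measure_le_tauOrbit_of_mapClusterPt [TopologicalSpace M] [OpensMeasurableSpace M]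
    [HasOuterApproxClosed M] {σ : M → M} {x : M} {μ : ProbabilityMeasure M}
    (hμ : MapClusterPt μ atTop (empiricalProb σ x)) {U : Set M} (hU : IsOpen U) :
    μ.toMeasure U ≤ tauOrbit σ x U := by
  set F := map (empiricalProb σ x) atTop
  have : (𝓝 μ ⊓ F).NeBot := hμ
  let measureOf : ProbabilityMeasure M → ℝ≥0∞ := fun ν => ν.toMeasure U
  calc μ.toMeasure U ≤ liminf measureOf (𝓝 μ ⊓ F) :=
        ProbabilityMeasure.le_liminf_measure_open_of_tendsto (tendsto_id.mono_left inf_le_left) hU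
    _ ≤ limsup measureOf (𝓝 μ ⊓ F) := liminf_le_limsup
    _ ≤ limsup measureOf F := limsup_le_limsup_of_le inf_le_right
    _ = limsup (fun n => (empiricalProb σ x n).toMeasure U) atTop := (limsup_comp _ _ _).symm
    _ = tauOrbit σ x U := by
        simp only [empiricalProb_apply σ x _ hU.measurableSet]
        exact limsup_nat_add (fun n => (∑ j ∈ Finset.range n,
          U.indicator (fun _ => (1 : ℝ≥0∞)) (σ^[j] x)) / (n : ℝ≥0∞)) 1

end EmpiricalMeasures

section CaratheodoryConstruction

variable {X : Type*} [MetricSpace X]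

theorem nuAux_le_nuFun (f : X → X) (x : X) {r : ℝ} (hr : 0 < r) (Y : Set X) :
    nuAux f x r Y ≤ nuFun f x Y :=
  le_iSup₂ (f := fun r (_ : 0 < r) => nuAux f x r Y) r hr

/-- A set of diameter at most `r` contains at most one of the `r`-separated points `Q i`. -/
theorem card_mul_le_nuAux {ι : Type*} [Fintype ι] (f : X → X) (x : X) {r : ℝ} (hr : 0 ≤ r)
    {Y : Set X} {Q : ι → X} (hQY : ∀ i, Q i ∈ Y) (hQ : Pairwise fun i j => r < dist (Q i) (Q j))
    {c : ℝ≥0∞} (hc : ∀ i U, IsOpen U → Q i ∈ U → c ≤ tauOrbit f x U) :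
    Fintype.card ι * c ≤ nuAux f x r Y := by
  refine le_iInf fun I => le_iInf fun hcov => le_iInf fun hopen => le_iInf fun hdiam => ?_
  choose k hk using fun i => mem_iUnion.mp (hcov (hQY i))
  have hk_inj : Function.Injective k := by
    intro i j hij
    by_contra hne
    have hedist := (Metric.edist_le_ediam_of_mem (hk i) (hij ▸ hk j)).trans (hdiam _)
    rw [edist_dist, ENNReal.ofReal_le_ofReal_iff hr] at hedist
    exact (hQ hne).not_ge hedist
  calc Fintype.card ι * c = ∑ _i : ι, c := by simp
    _ ≤ ∑ i, tauOrbit f x (I (k i)) := Finset.sum_le_sum fun i _ => hc i _ (hopen _) (hk i)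
    _ = ∑ n ∈ Finset.univ.image k, tauOrbit f x (I n) :=
        (Finset.sum_image (f := fun n => tauOrbit f x (I n)) fun i _ j _ h => hk_inj h).symm
    _ ≤ ∑' n, tauOrbit f x (I n) := ENNReal.sum_le_tsum _

end CaratheodoryConstruction

theorem maximal_oscillation_implies_wild_historic_general
    {S : Type*} [TopologicalSpace S] [DiscreteTopology S] [Nontrivial S]
    (a : S → S → Prop) (haper : MarkovAperiodic a)
    (η : MarkovShift a → Measure (MarkovShift a))
    (hη : ∀ z : MarkovShift a, ∀ E : Set (MarkovShift a), MeasurableSet E →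
      η z E = nuFun (markovLeftShift a) z E)
    (x : MarkovShift a)
    (hosc : ∀ μ : ProbabilityMeasure (MarkovShift a),
      (∀ E : Set (MarkovShift a), MeasurableSet E →
        μ.toMeasure ((markovLeftShift a) ⁻¹' E) = μ.toMeasure E) →
      MapClusterPt μ Filter.atTop (empiricalProb (markovLeftShift a) x)) :
    ∀ A : Set (MarkovShift a), IsOpen A → A.Nonempty → η x A = ∞ := by
  rintro A hA ⟨z, hz⟩
  obtain ⟨N, hN, hbridge⟩ := haper
  obtain ⟨β, γ, hβγ⟩ := exists_pair_ne S
  obtain ⟨ℓ, hℓ⟩ := MarkovShift.exists_cylinder_subset hA hz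
  have hσ := (MarkovShift.continuous_markovLeftShift a).measurable
  rw [hη x A hA.measurableSet]
  suffices h : ∀ K : ℕ, (K : ℝ≥0∞) ≤ nuFun (markovLeftShift a) x A by
    by_contra hne
    obtain ⟨K, hK⟩ := ENNReal.exists_nat_gt hne
    exact (h K).not_gt hK
  intro K
  obtain ⟨m, hm⟩ := exists_mul_add_le_two_pow (K * N) (K * (ℓ + N))
  obtain ⟨Q, hQz, hQper, hQsep⟩ := MarkovShift.exists_periodic_family hN
    (MarkovShift.exists_apply_mul_eq hN hbridge) hβγ z ℓ m
  obtain ⟨n, hn⟩ : ∃ n, ℓ + (m + 1) * N = n + 1 := Nat.exists_eq_add_one.mpr (by positivity)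
  rw [hn] at hQper hQsep
  have hτ : ∀ v U, IsOpen U → Q v ∈ U →
      ((n + 1 : ℕ) : ℝ≥0∞)⁻¹ ≤ tauOrbit (markovLeftShift a) x U := fun v U hU hQU =>
    (inv_le_empiricalProb_of_mem _ n hU.measurableSet hQU).trans <|
      measure_le_tauOrbit_of_mapClusterPt
        (hosc _ fun _ hE => empiricalProb_preimage_of_isPeriodicPt hσ (hQper v) hE) hU
  have hK : K * (n + 1) ≤ 2 ^ m := by rw [← hn]; linarith [hm]
  calc (K : ℝ≥0∞) ≤ 2 ^ m * ((n + 1 : ℕ) : ℝ≥0∞)⁻¹ := by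
        rw [← div_eq_mul_inv, ENNReal.le_div_iff_mul_le (by simp) (by simp)]
        exact_mod_cast hK
    _ = Fintype.card (Fin m → Bool) * ((n + 1 : ℕ) : ℝ≥0∞)⁻¹ := by simp
    _ ≤ nuAux (markovLeftShift a) x ((1 / 2) ^ (n + 1)) A :=
        card_mul_le_nuAux _ x (by positivity) (fun v => hℓ _ (hQz v)) hQsep hτ
    _ ≤ nuFun (markovLeftShift a) x A := nuAux_le_nuFun _ x (by positivity) A

/-- In a mixing topological Markov chain, every point with maximal oscillation (every
shift-invariant Borel probability measure is a weak* accumulation point of its empirical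
measures) is a wild historic point. -/
theorem maximal_oscillation_implies_wild_historic
    {S : Type*} [TopologicalSpace S] [DiscreteTopology S] [Countable S] [Nontrivial S]
    (a : S → S → Prop) (haper : MarkovAperiodic a)
    (η : MarkovShift a → Measure (MarkovShift a))
    (hη : ∀ z : MarkovShift a, ∀ E : Set (MarkovShift a), MeasurableSet E →
      η z E = nuFun (markovLeftShift a) z E)
    (x : MarkovShift a)
    (hosc : ∀ μ : ProbabilityMeasure (MarkovShift a),
      (∀ E : Set (MarkovShift a), MeasurableSet E →
        μ.toMeasure ((markovLeftShift a) ⁻¹' E) = μ.toMeasure E) →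
      MapClusterPt μ Filter.atTop (empiricalProb (markovLeftShift a) x)) :
    ∀ A : Set (MarkovShift a), IsOpen A → A.Nonempty → η x A = ∞ :=
  maximal_oscillation_implies_wild_historic_general a haper η hη x hosc
end

section
/- Let 𝕏 be a compact metric space. If η is a probability measure, i.e. η(𝕏)=1, then η(A)=τ(A) for every open set A⊆𝕏 with η(∂A)=0. -/
open MeasureTheory Filter Set Topology
open scoped ENNReal

/-- A finitely additive outer probability on `X`: a monotone, finitely subadditive set
function defined on all subsets of `X`, with values in `[0,1]` and total mass `1`. -/
structure FinAddOuterProb (X : Type*) where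
  toFun : Set X → ℝ≥0∞
  mono' : ∀ ⦃A B : Set X⦄, A ⊆ B → toFun A ≤ toFun B
  subadd' : ∀ A B : Set X, toFun (A ∪ B) ≤ toFun A + toFun B
  le_one' : ∀ A : Set X, toFun A ≤ 1
  univ_eq' : toFun Set.univ = 1

/-- The premeasure `τ(A) = limsup_n (1/n) ∑_{j<n} ξ_j(A)`. -/
noncomputable def tauSeq {X : Type*} (ξ : ℕ → FinAddOuterProb X) (A : Set X) : ℝ≥0∞ :=
  Filter.atTop.limsup fun n : ℕ => (∑ j ∈ Finset.range n, (ξ j).toFun A) / (n : ℝ≥0∞)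

/-- `ν_r(Y)`: infimum of `∑_i τ(I_i)` over countable covers of `Y` by open sets of
diameter at most `r`. -/
noncomputable def nuSeqAux {X : Type*} [MetricSpace X] (ξ : ℕ → FinAddOuterProb X) (r : ℝ)
    (Y : Set X) : ℝ≥0∞ :=
  ⨅ (I : ℕ → Set X) (_ : Y ⊆ ⋃ n, I n) (_ : ∀ n, IsOpen (I n))
    (_ : ∀ n, EMetric.diam (I n) ≤ ENNReal.ofReal r), ∑' n, tauSeq ξ (I n)

/-- `ν(Y) = sup_{r>0} ν_r(Y)`, the Carathéodory Method II construction from `τ`. -/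
noncomputable def nuSeq {X : Type*} [MetricSpace X] (ξ : ℕ → FinAddOuterProb X)
    (Y : Set X) : ℝ≥0∞ :=
  ⨆ (r : ℝ) (_ : 0 < r), nuSeqAux ξ r Y

/-- limsup over atTop in `ℝ≥0∞` is subadditive. -/
lemma ennreal_limsup_add_le (u v : ℕ → ℝ≥0∞) :
    Filter.atTop.limsup (fun n => u n + v n) ≤
      Filter.atTop.limsup u + Filter.atTop.limsup v := by
  rw [limsup_eq_iInf_iSup_of_nat, limsup_eq_iInf_iSup_of_nat, limsup_eq_iInf_iSup_of_nat]
  have hA : ∀ {w : ℕ → ℝ≥0∞} {m n : ℕ}, m ≤ n →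
      (⨆ i ≥ n, w i) ≤ ⨆ i ≥ m, w i := by
    intro w m n hmn
    exact iSup₂_le fun i hi => le_iSup₂ (f := fun i _ => w i) i (hmn.trans hi)
  rw [ENNReal.iInf_add_iInf (fun i j => ⟨max i j,
    add_le_add (hA (le_max_left i j)) (hA (le_max_right i j))⟩)]
  refine le_iInf fun n => iInf_le_of_le n ?_
  exact iSup₂_le fun i hi =>
    add_le_add (le_iSup₂ (f := fun i _ => u i) i hi) (le_iSup₂ (f := fun i _ => v i) i hi)

lemma tauSeq_mono {X : Type*} (ξ : ℕ → FinAddOuterProb X) {A B : Set X} (h : A ⊆ B) :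
    tauSeq ξ A ≤ tauSeq ξ B := by
  refine limsup_le_limsup (Eventually.of_forall fun n => ?_)
  exact ENNReal.div_le_div_right (Finset.sum_le_sum fun j _ => (ξ j).mono' h) _

lemma tauSeq_union_le {X : Type*} (ξ : ℕ → FinAddOuterProb X) (A B : Set X) :
    tauSeq ξ (A ∪ B) ≤ tauSeq ξ A + tauSeq ξ B := by
  refine le_trans (le_trans (limsup_le_limsup (Eventually.of_forall fun n => ?_))
    (ennreal_limsup_add_le _ _)) le_rfl
  calc (∑ j ∈ Finset.range n, (ξ j).toFun (A ∪ B)) / (n : ℝ≥0∞)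
      ≤ (∑ j ∈ Finset.range n, ((ξ j).toFun A + (ξ j).toFun B)) / (n : ℝ≥0∞) :=
        ENNReal.div_le_div_right (Finset.sum_le_sum fun j _ => (ξ j).subadd' A B) _
    _ = (∑ j ∈ Finset.range n, (ξ j).toFun A) / (n : ℝ≥0∞)
          + (∑ j ∈ Finset.range n, (ξ j).toFun B) / (n : ℝ≥0∞) := by
        rw [ENNReal.div_add_div_same, Finset.sum_add_distrib]

lemma tauSeq_univ {X : Type*} (ξ : ℕ → FinAddOuterProb X) :
    tauSeq ξ (Set.univ : Set X) = 1 := by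
  have h : (fun n : ℕ => (∑ j ∈ Finset.range n, (ξ j).toFun Set.univ) / (n : ℝ≥0∞))
      =ᶠ[atTop] fun _ => (1 : ℝ≥0∞) := by
    filter_upwards [eventually_ge_atTop 1] with n hn
    simp only [fun j => (ξ j).univ_eq', Finset.sum_const, Finset.card_range, nsmul_eq_mul,
      mul_one]
    exact ENNReal.div_self (Nat.cast_ne_zero.mpr (by omega)) (ENNReal.natCast_ne_top n)
  rw [tauSeq, limsup_congr h, limsup_const]

lemma tauSeq_biUnion_le {X : Type*} (ξ : ℕ → FinAddOuterProb X) (I : ℕ → Set X)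
    (t : Finset ℕ) (ht : t.Nonempty) :
    tauSeq ξ (⋃ i ∈ t, I i) ≤ ∑ i ∈ t, tauSeq ξ (I i) := by
  induction ht using Finset.Nonempty.cons_induction with
  | singleton a => simp
  | cons a s ha hs IH =>
      rw [Finset.cons_eq_insert, Finset.set_biUnion_insert, Finset.sum_insert ha]
      exact (tauSeq_union_le ξ _ _).trans (add_le_add le_rfl IH)

lemma tauSeq_le_nuSeq {X : Type*} [MetricSpace X] (ξ : ℕ → FinAddOuterProb X)
    {K : Set X} (hK : IsCompact K) : tauSeq ξ K ≤ nuSeq ξ K := by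
  refine le_trans ?_ (le_iSup_of_le (1 : ℝ) (le_iSup_of_le one_pos le_rfl))
  refine le_iInf fun I => le_iInf fun hcov => le_iInf fun hopen => le_iInf fun _ => ?_
  obtain ⟨t, ht⟩ := hK.elim_finite_subcover I hopen hcov
  calc tauSeq ξ K ≤ tauSeq ξ (⋃ i ∈ insert 0 t, I i) := by
        refine tauSeq_mono ξ (ht.trans ?_)
        exact iUnion₂_subset fun i hi =>
          subset_biUnion_of_mem (Finset.mem_insert_of_mem hi)
    _ ≤ ∑ i ∈ insert 0 t, tauSeq ξ (I i) :=
        tauSeq_biUnion_le ξ I _ (Finset.insert_nonempty 0 t)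
    _ ≤ ∑' i, tauSeq ξ (I i) := ENNReal.sum_le_tsum _

/-- Let `𝕏` be a compact metric space. If `η` is a probability measure (`η(𝕏) = 1`), then
`η(A) = τ(A)` for every open set `A ⊆ 𝕏` with `η(∂A) = 0`. -/
theorem eta_eq_tau_on_null_boundary_open
    {X : Type*} [MetricSpace X] [CompactSpace X] [MeasurableSpace X] [BorelSpace X]
    (ξ : ℕ → FinAddOuterProb X)
    (η : Measure X) (hη : ∀ E : Set X, MeasurableSet E → η E = nuSeq ξ E)
    (hprob : η Set.univ = 1) :
    ∀ A : Set X, IsOpen A → η (frontier A) = 0 → η A = tauSeq ξ A := by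
  intro A hA hfr
  have hAm : MeasurableSet A := hA.measurableSet
  refine le_antisymm ?_ ?_
  · -- η A ≤ τ A, via the compact complement
    have hcl : IsCompact (Aᶜ : Set X) := hA.isClosed_compl.isCompact
    have h1 : η (Aᶜ) = nuSeq ξ (Aᶜ) := hη _ hAm.compl
    have h2 : tauSeq ξ (Aᶜ) ≤ η (Aᶜ) := h1 ▸ tauSeq_le_nuSeq ξ hcl
    have hsum : η A + η (Aᶜ) = 1 := by
      rw [measure_add_measure_compl hAm, hprob]
    have hone : (1 : ℝ≥0∞) ≤ tauSeq ξ A + tauSeq ξ (Aᶜ) := by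
      calc (1 : ℝ≥0∞) = tauSeq ξ (Set.univ : Set X) := (tauSeq_univ ξ).symm
        _ = tauSeq ξ (A ∪ Aᶜ) := by rw [Set.union_compl_self]
        _ ≤ tauSeq ξ A + tauSeq ξ (Aᶜ) := tauSeq_union_le ξ _ _
    have hne : η (Aᶜ) ≠ ⊤ := by
      refine ne_top_of_le_ne_top (by simp : (1:ℝ≥0∞) ≠ ⊤) ?_
      rw [← hprob]; exact measure_mono (Set.subset_univ _)
    have : η A + η (Aᶜ) ≤ tauSeq ξ A + η (Aᶜ) :=
      hsum.le.trans (hone.trans (add_le_add le_rfl h2))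
    exact (ENNReal.add_le_add_iff_right hne).mp this
  · -- τ A ≤ η A, via the compact closure
    have hcl : IsCompact (closure A) := isClosed_closure.isCompact
    have h1 : η (closure A) = nuSeq ξ (closure A) := hη _ isClosed_closure.measurableSet
    calc tauSeq ξ A ≤ tauSeq ξ (closure A) := tauSeq_mono ξ subset_closure
      _ ≤ nuSeq ξ (closure A) := tauSeq_le_nuSeq ξ hcl
      _ = η (closure A) := h1.symm
      _ ≤ η (A ∪ frontier A) := by
          refine measure_mono ?_
          rw [hA.frontier_eq]
          exact fun x hx => (Classical.em (x ∈ A)).elim Or.inl fun h => Or.inr ⟨hx, h⟩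
      _ ≤ η A + η (frontier A) := measure_union_le _ _
      _ = η A := by rw [hfr, add_zero]
end

section
/- Let 𝕏 be a compact metric space, f:𝕏→𝕏 a Borel measurable map and x∈𝕏. If η_x is a probability measure, i.e. η_x(𝕏)=1, then ∫φ dη_x = limsup_{n→∞}(1/n)∑_{j=0}^{n−1}φ(f^j(x)) for every continuous function φ:𝕏→ℝ. -/
/-! Closed subsets of the compact space are compact, so every countable open cover of a closed
set `F` has a finite subcover, and finite subadditivity of `limsup` gives `τ_x(F) ≤ ν(F) = η_x(F)`.
Since `τ_x(F)` is the `limsup` of `μₙ(F)` for the empirical measures `μₙ = (1/n) ∑_{j<n} δ_{f^j x}`,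
this is the closed-set condition of the portmanteau theorem: `μₙ → η_x` weakly. The integral of
`φ` against `μₙ` is the `n`-th Birkhoff average of `φ`, so these averages converge to
`∫ φ dη_x`, which is therefore also their `limsup`. -/

open MeasureTheory Filter Set Topology
open scoped ENNReal

open scoped BoundedContinuousFunction

theorem ENNReal.limsup_add_le' {α : Type*} {l : Filter α} (u v : α → ℝ≥0∞) :
    l.limsup (u + v) ≤ l.limsup u + l.limsup v := by
  refine ENNReal.le_of_forall_pos_le_add fun ε hε hfin => ?_
  obtain ⟨hu, hv⟩ := ENNReal.add_lt_top.mp hfin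
  have hδ : (ε / 2 : ℝ≥0∞) ≠ 0 := (ENNReal.half_pos (by exact_mod_cast hε.ne')).ne'
  refine limsup_le_of_le (by isBoundedDefault) ?_
  filter_upwards [eventually_lt_of_limsup_lt (ENNReal.lt_add_right hu.ne hδ),
    eventually_lt_of_limsup_lt (ENNReal.lt_add_right hv.ne hδ)] with a hua hva
  calc u a + v a ≤ (l.limsup u + ε / 2) + (l.limsup v + ε / 2) := add_le_add hua.le hva.le
    _ = l.limsup u + l.limsup v + ε := by rw [add_add_add_comm, ENNReal.add_halves]

theorem ENNReal.limsup_finsetSum_le {α ι : Type*} {l : Filter α}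
    (s : Finset ι) (u : ι → α → ℝ≥0∞) :
    l.limsup (fun a => ∑ i ∈ s, u i a) ≤ ∑ i ∈ s, l.limsup (u i) := by
  classical
  induction s using Finset.induction with
  | empty => exact limsup_const_bot.le
  | insert i s hi ih =>
    simp only [Finset.sum_insert hi]
    exact (ENNReal.limsup_add_le' _ _).trans (add_le_add_right ih _)

theorem Set.indicator_le_sum_indicator_of_subset_biUnion {X ι M : Type*} [AddCommMonoid M]
    [PartialOrder M] [IsOrderedAddMonoid M] [CanonicallyOrderedAdd M] {A : Set X} {t : Finset ι}
    {I : ι → Set X} (h : A ⊆ ⋃ i ∈ t, I i) (g : X → M) (y : X) :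
    A.indicator g y ≤ ∑ i ∈ t, (I i).indicator g y := by
  by_cases hy : y ∈ A
  · obtain ⟨i, hi, hyi⟩ := Set.mem_iUnion₂.mp (h hy)
    rw [indicator_of_mem hy, ← indicator_of_mem hyi g]
    exact Finset.single_le_sum (f := fun i => (I i).indicator g y) (fun _ _ => zero_le) hi
  · simp [hy]

section Orbit

variable {X : Type*} (f : X → X) (x : X)

theorem tauOrbit_le_sum_of_subset_biUnion {ι : Type*} {A : Set X} {t : Finset ι}
    {I : ι → Set X} (h : A ⊆ ⋃ i ∈ t, I i) :
    tauOrbit f x A ≤ ∑ i ∈ t, tauOrbit f x (I i) := by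
  refine (limsup_le_limsup (Eventually.of_forall fun n => ?_)).trans
    (ENNReal.limsup_finsetSum_le t _)
  simp only [div_eq_mul_inv, ← Finset.sum_mul]
  rw [Finset.sum_comm]
  gcongr with j
  exact Set.indicator_le_sum_indicator_of_subset_biUnion h _ _

theorem tauOrbit_le_nuAux_of_isCompact [MetricSpace X] {K : Set X} (hK : IsCompact K) (r : ℝ) :
    tauOrbit f x K ≤ nuAux f x r K := by
  refine le_iInf fun I => le_iInf fun hcov => le_iInf fun hopen => le_iInf fun _ => ?_
  obtain ⟨t, ht⟩ := hK.elim_finite_subcover I hopen hcov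
  exact (tauOrbit_le_sum_of_subset_biUnion f x ht).trans (ENNReal.sum_le_tsum t)

theorem tauOrbit_le_nuFun_of_isCompact [MetricSpace X] {K : Set X} (hK : IsCompact K) :
    tauOrbit f x K ≤ nuFun f x K :=
  (tauOrbit_le_nuAux_of_isCompact f x hK 1).trans (le_iSup₂_of_le 1 one_pos le_rfl)

variable [MeasurableSpace X]

noncomputable def empiricalMeasure (n : ℕ) : Measure X :=
  (n : ℝ≥0∞)⁻¹ • ∑ j ∈ Finset.range n, Measure.dirac (f^[j] x)

variable [MeasurableSingletonClass X]

theorem empiricalMeasure_apply (n : ℕ) (A : Set X) :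
    empiricalMeasure f x n A =
      (∑ j ∈ Finset.range n, A.indicator (fun _ => (1 : ℝ≥0∞)) (f^[j] x)) / n := by
  simp only [empiricalMeasure, Measure.smul_apply, Measure.finsetSum_apply, Measure.dirac_apply,
    smul_eq_mul]
  rw [ENNReal.div_eq_inv_mul]; rfl

theorem tauOrbit_eq_limsup_empiricalMeasure (A : Set X) :
    tauOrbit f x A = atTop.limsup fun n => empiricalMeasure f x n A := by
  simp only [empiricalMeasure_apply, tauOrbit]

-- The shift is needed: `empiricalMeasure f x 0 = 0`.
instance (n : ℕ) : IsProbabilityMeasure (empiricalMeasure f x (n + 1)) := by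
  constructor
  rw [empiricalMeasure_apply]
  simp [ENNReal.div_self]

theorem integral_empiricalMeasure (n : ℕ) (φ : X → ℝ) :
    ∫ y, φ y ∂empiricalMeasure f x n = birkhoffAverage ℝ f φ n x := by
  rw [empiricalMeasure, integral_smul_measure,
    integral_finsetSum_measure fun j _ => integrable_dirac enorm_lt_top]
  simp [birkhoffAverage, birkhoffSum, integral_dirac]

variable [TopologicalSpace X] [OpensMeasurableSpace X]

theorem tendsto_empiricalMeasure_of_forall_isClosed_tauOrbit_le (μ : ProbabilityMeasure X)
    (hμ : ∀ F, IsClosed F → tauOrbit f x F ≤ (μ : Measure X) F) :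
    Tendsto (β := ProbabilityMeasure X) (fun n => ⟨empiricalMeasure f x (n + 1), inferInstance⟩)
      atTop (𝓝 μ) := by
  refine tendsto_of_forall_isClosed_limsup_le' fun F hF => ?_
  have h := hμ F hF
  rwa [tauOrbit_eq_limsup_empiricalMeasure, ← limsup_nat_add _ 1] at h

theorem tendsto_birkhoffAverage_of_forall_isClosed_tauOrbit_le
    (μ : Measure X) [IsProbabilityMeasure μ] (hμ : ∀ F, IsClosed F → tauOrbit f x F ≤ μ F)
    (φ : X →ᵇ ℝ) :
    Tendsto (fun n => birkhoffAverage ℝ f φ n x) atTop (𝓝 (∫ y, φ y ∂μ)) := by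
  have h := ProbabilityMeasure.tendsto_iff_forall_integral_tendsto.mp
    (tendsto_empiricalMeasure_of_forall_isClosed_tauOrbit_le f x ⟨μ, ‹_›⟩ hμ) φ
  simp only [ProbabilityMeasure.coe_mk, integral_empiricalMeasure] at h
  exact (tendsto_add_atTop_iff_nat 1).mp h

end Orbit

theorem integral_eta_eq_limsup_birkhoff_general
    {X : Type*} [MetricSpace X] [CompactSpace X] [MeasurableSpace X] [BorelSpace X]
    (f : X → X) (x : X)
    (η : X → Measure X) (hη : ∀ y : X, ∀ E : Set X, MeasurableSet E → η y E = nuFun f y E)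
    (hprob : η x Set.univ = 1) :
    ∀ φ : X → ℝ, Continuous φ →
      ∫ y, φ y ∂(η x) =
        Filter.atTop.limsup
          (fun n : ℕ => (∑ j ∈ Finset.range n, φ (f^[j] x)) / (n : ℝ)) := by
  intro φ hφ
  have : IsProbabilityMeasure (η x) := ⟨hprob⟩
  have hclosed (F : Set X) (hF : IsClosed F) : tauOrbit f x F ≤ η x F :=
    hη x F hF.measurableSet ▸ tauOrbit_le_nuFun_of_isCompact f x hF.isCompact
  have h := tendsto_birkhoffAverage_of_forall_isClosed_tauOrbit_le f x (η x) hclosed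
    (BoundedContinuousFunction.mkOfCompact ⟨φ, hφ⟩)
  simp only [birkhoffAverage, birkhoffSum, smul_eq_mul, inv_mul_eq_div] at h
  exact h.limsup_eq.symm

/-- Let `𝕏` be a compact metric space, `f : 𝕏 → 𝕏` Borel measurable and `x ∈ 𝕏`. If `η_x`
is a probability measure, then `∫ φ dη_x = limsup_n (1/n) ∑_{j<n} φ(f^j x)` for every
continuous `φ : 𝕏 → ℝ`. -/
theorem integral_eta_eq_limsup_birkhoff
    {X : Type*} [MetricSpace X] [CompactSpace X] [MeasurableSpace X] [BorelSpace X]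
    (f : X → X) (hf : Measurable f) (x : X)
    (η : X → Measure X) (hη : ∀ y : X, ∀ E : Set X, MeasurableSet E → η y E = nuFun f y E)
    (hprob : η x Set.univ = 1) :
    ∀ φ : X → ℝ, Continuous φ →
      ∫ y, φ y ∂(η x) =
        Filter.atTop.limsup
          (fun n : ℕ => (∑ j ∈ Finset.range n, φ (f^[j] x)) / (n : ℝ)) :=
  integral_eta_eq_limsup_birkhoff_general f x η hη hprob
end
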